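/- arXiv:1001.2381 — 2 statements merged into one kernel-verified Lean document; each statement's English description precedes it below -/
import Mathlib

section
/- Let T > 0 and let h : ℝ → ℝ be Lipschitz with constant c. Let x and x_n (n ∈ ℕ) be càdlàg functions on [0,T], and let y and y_n be bounded Borel measurable functions on [0,T] satisfying y(t) = x(t) + ∫₀ᵗ h(y(s)) ds and y_n(t) = x_n(t) + ∫₀ᵗ h(y_n(s)) ds for all t ∈ [0,T]. If d_{M₁}(x_n, x) → 0 as n → ∞, then d_{M₁}(y_n, y) → 0 as n → ∞. (Theorem 1.1: the integral representation map is continuous on D([0,T],ℝ) in the M₁ topology.) -/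
open Set Filter MeasureTheory Topology

/-- The left limit of `x` at `t`, with the convention `x(0−) = x(0)`. -/
noncomputable def leftL (x : ℝ → ℝ) (t : ℝ) : ℝ :=
  if t = 0 then x 0 else Function.leftLim x t

/-- `x` is càdlàg on `[0, T]`: right-continuous on `[0, T)` and with left limits on `(0, T]`. -/
def IsCadlagOn (T : ℝ) (x : ℝ → ℝ) : Prop :=
  (∀ t ∈ Set.Ico (0:ℝ) T, Filter.Tendsto x (nhdsWithin t (Set.Ici t)) (nhds (x t))) ∧
  (∀ t ∈ Set.Ioc (0:ℝ) T, ∃ L : ℝ, Filter.Tendsto x (nhdsWithin t (Set.Iio t)) (nhds L))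

/-- `(u, r)` is a parametric representation of the càdlàg function `x` on `[0, T]`. -/
def IsParamRep (T : ℝ) (x u r : ℝ → ℝ) : Prop :=
  ContinuousOn u (Set.Icc 0 1) ∧ ContinuousOn r (Set.Icc 0 1) ∧
  MonotoneOn r (Set.Icc 0 1) ∧ r 0 = 0 ∧ r 1 = T ∧
  (∀ s ∈ Set.Icc (0:ℝ) 1, u s ∈ segment ℝ (leftL x (r s)) (x (r s))) ∧
  (∀ t ∈ Set.Icc (0:ℝ) T, ∀ v ∈ segment ℝ (leftL x t) (x t),
    ∃ s ∈ Set.Icc (0:ℝ) 1, r s = t ∧ u s = v) ∧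
  (∀ s₁ ∈ Set.Icc (0:ℝ) 1, ∀ s₂ ∈ Set.Icc (0:ℝ) 1, s₁ ≤ s₂ → r s₁ = r s₂ →
    0 ≤ (u s₂ - u s₁) * (x (r s₁) - leftL x (r s₁)))

/-- Uniform norm over `[0, 1]`. -/
noncomputable def unif (f : ℝ → ℝ) : ℝ := ⨆ s : Set.Icc (0:ℝ) 1, |f s.1|

/-- Uniform norm over `[0, T]`. -/
noncomputable def supT (T : ℝ) (f : ℝ → ℝ) : ℝ := ⨆ t : Set.Icc (0:ℝ) T, |f t.1|

/-- The maximum-jump functional `J_max(x)` over `[0, T]`. -/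
noncomputable def Jmax (T : ℝ) (x : ℝ → ℝ) : ℝ :=
  ⨆ t : Set.Icc (0:ℝ) T, |x t.1 - leftL x t.1|

/-- The Skorohod `M₁` metric on `D([0, T], ℝ)`. -/
noncomputable def dM1 (T : ℝ) (x y : ℝ → ℝ) : ℝ :=
  sInf {d : ℝ | ∃ ux rx uy ry : ℝ → ℝ, IsParamRep T x ux rx ∧ IsParamRep T y uy ry ∧
    d = max (unif fun s => ux s - uy s) (unif fun s => rx s - ry s)}

/-- The `L₁` norm over `[0, 1]`. -/
noncomputable def L1norm (g : ℝ → ℝ) : ℝ := ∫ s in (0:ℝ)..1, |g s|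

/-- `r` is absolutely continuous on `[0,1]` with (integrable) derivative `r'`. -/
def AbsContOn01 (r r' : ℝ → ℝ) : Prop :=
  IntervalIntegrable r' MeasureTheory.volume 0 1 ∧
  ∀ s ∈ Set.Icc (0:ℝ) 1, r s = r 0 + ∫ w in (0:ℝ)..s, r' w

/-- `y` is bounded and Borel measurable on `[0, T]`. -/
def BddMeasOn (T : ℝ) (y : ℝ → ℝ) : Prop :=
  (∃ M : ℝ, ∀ t ∈ Set.Icc (0:ℝ) T, |y t| ≤ M) ∧
  Measurable fun t : Set.Icc (0:ℝ) T => y t.1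

/-- The `M₁` oscillation function `w_s(x, δ)` on `[0, T]`. -/
noncomputable def wOsc (T : ℝ) (x : ℝ → ℝ) (δ : ℝ) : ℝ :=
  sSup {v : ℝ | ∃ t ∈ Set.Icc (0:ℝ) T, ∃ t₁ t₂ t₃ : ℝ,
    max 0 (t - δ) ≤ t₁ ∧ t₁ < t₂ ∧ t₂ < t₃ ∧ t₃ ≤ min (t + δ) T ∧
    v = Metric.infDist (x t₂) (segment ℝ (x t₁) (x t₃))}

/-- The ordinary oscillation modulus `ν(x, δ)` on `[0, T]`. -/
noncomputable def nuOsc (T : ℝ) (x : ℝ → ℝ) (δ : ℝ) : ℝ :=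
  sSup {v : ℝ | ∃ t ∈ Set.Icc (0:ℝ) (T - δ), ∃ t₁ ∈ Set.Icc t (t + δ),
    ∃ t₂ ∈ Set.Icc t (t + δ), v = |x t₁ - x t₂|}

/-!
Writing `G(t) = ∫₀ᵗ h(y(s)) ds`, the equation reads `y = x + G` with `G` Lipschitz. Adding a
continuous `G` to a càdlàg function transports parametric representations,
`(u, r) ↦ (u + G ∘ r, r)`, so `δ`-close representations of `xₙ` and `x` give
`d_{M₁}(yₙ, y) ≤ (1 + Lip G) δ + ‖Gₙ - G‖_∞`. By Grönwall, `‖Gₙ - G‖_∞ ≤ c e^{cT} ‖xₙ - x‖_{L¹}`,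
and `M₁` convergence forces `L¹` convergence.
-/

open scoped NNReal

namespace IsCadlagOn

variable {T : ℝ} {x : ℝ → ℝ}

lemma tendsto_leftL (hx : IsCadlagOn T x) {t : ℝ} (ht : t ∈ Ioc 0 T) :
    Tendsto x (𝓝[<] t) (𝓝 (leftL x t)) := by
  obtain ⟨L, hL⟩ := hx.2 t ht
  rwa [leftL, if_neg ht.1.ne', leftLim_eq_of_tendsto hL]

lemma leftL_mem (hx : IsCadlagOn T x) {C : Set ℝ} (hC : IsClosed C) {t : ℝ} (ht : t ∈ Icc 0 T)
    (hxC : ∀ᶠ s in 𝓝 t, s ∈ Icc 0 T → x s ∈ C) : leftL x t ∈ C := by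
  rcases ht.1.eq_or_lt with rfl | ht₀
  · simpa [leftL] using hxC.self_of_nhds ht
  · refine hC.mem_of_tendsto (hx.tendsto_leftL ⟨ht₀, ht.2⟩) ?_
    filter_upwards [nhdsWithin_le_nhds hxC, Ioo_mem_nhdsLT ht₀] with s hs hs'
    exact hs ⟨hs'.1.le, hs'.2.le.trans ht.2⟩

lemma segment_subset (hx : IsCadlagOn T x) {C : Set ℝ} (hC : IsClosed C) (hCc : Convex ℝ C)
    {t : ℝ} (ht : t ∈ Icc 0 T) (hxC : ∀ᶠ s in 𝓝 t, s ∈ Icc 0 T → x s ∈ C) :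
    segment ℝ (leftL x t) (x t) ⊆ C :=
  hCc.segment_subset (hx.leftL_mem hC ht hxC) (hxC.self_of_nhds ht)

lemma abs_le_of_mem_segment (hx : IsCadlagOn T x) {M : ℝ} (hM : ∀ t ∈ Icc 0 T, |x t| ≤ M)
    {t v : ℝ} (ht : t ∈ Icc 0 T) (hv : v ∈ segment ℝ (leftL x t) (x t)) : |v| ≤ M := by
  have := hx.segment_subset Metric.isClosed_closedBall (convex_closedBall 0 M) ht
    (Eventually.of_forall fun s hs => by simpa using hM s hs) hv
  simpa using this

lemma exists_segment_near (hx : IsCadlagOn T x) {t : ℝ} (ht : t ∈ Ioo 0 T)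
    (hcont : x t = leftL x t) {η : ℝ} (hη : 0 < η) :
    ∃ ρ > 0, ∀ t' ∈ Icc 0 T, |t' - t| < ρ →
      ∀ v ∈ segment ℝ (leftL x t') (x t'), |v - x t| ≤ η := by
  have hxt : ContinuousAt x t := continuousAt_iff_continuous_left'_right'.2
    ⟨by simpa only [ContinuousWithinAt, hcont] using hx.tendsto_leftL ⟨ht.1, ht.2.le⟩,
      (hx.1 t ⟨ht.1.le, ht.2⟩).mono_left (nhdsWithin_mono _ Ioi_subset_Ici_self)⟩
  obtain ⟨ρ, hρ, hball⟩ := Metric.continuousAt_iff.1 hxt η hη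
  refine ⟨ρ, hρ, fun t' ht' htt' v hv => ?_⟩
  have hnear : ∀ᶠ s in 𝓝 t', s ∈ Icc 0 T → x s ∈ Metric.closedBall (x t) η := by
    filter_upwards [Metric.isOpen_ball.mem_nhds (Metric.mem_ball.2 htt')] with s hs _
    exact (hball hs).le
  simpa [Real.dist_eq] using
    hx.segment_subset Metric.isClosed_closedBall (convex_closedBall _ _) ht' hnear hv

lemma exists_jump_le_right (hx : IsCadlagOn T x) {t : ℝ} (ht : t ∈ Ico 0 T) {ε : ℝ}
    (hε : 0 < ε) : ∃ w > t, ∀ t' ∈ Ioo t w, t' ≤ T → |x t' - leftL x t'| ≤ ε := by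
  have hnear : ∀ᶠ s in 𝓝[≥] t, x s ∈ Metric.closedBall (x t) (ε / 2) :=
    (hx.1 t ht).eventually (Metric.closedBall_mem_nhds _ (half_pos hε))
  obtain ⟨w, hw, hsub⟩ := mem_nhdsGE_iff_exists_Ico_subset.1 hnear
  refine ⟨w, hw, fun t' ht' ht'T => ?_⟩
  have ht'₀ : 0 < t' := ht.1.trans_lt ht'.1
  have hleft : leftL x t' ∈ Metric.closedBall (x t) (ε / 2) :=
    Metric.isClosed_closedBall.mem_of_tendsto (hx.tendsto_leftL ⟨ht'₀, ht'T⟩) <| by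
      filter_upwards [Ioo_mem_nhdsLT ht'.1] with s hs
      exact hsub ⟨hs.1.le, hs.2.trans ht'.2⟩
  have hright : x t' ∈ Metric.closedBall (x t) (ε / 2) := hsub ⟨ht'.1.le, ht'.2⟩
  rw [Metric.mem_closedBall, Real.dist_eq] at hleft hright
  calc |x t' - leftL x t'| = |(x t' - x t) - (leftL x t' - x t)| := by ring_nf
    _ ≤ |x t' - x t| + |leftL x t' - x t| := abs_sub _ _
    _ ≤ ε := by linarith

lemma countable_jumps (hx : IsCadlagOn T x) : {t ∈ Ioo 0 T | x t ≠ leftL x t}.Countable := by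
  let J : ℕ → Set ℝ := fun k => {t ∈ Ioo 0 T | 1 / (k + 1 : ℝ) < |x t - leftL x t|}
  -- Each point of `J k` is isolated from the right in `J k`.
  have hJ : ∀ k, (J k).Countable := fun k => by
    refine (countable_setOfPred_isolated_right_within (s := J k)).mono fun t ht => ?_
    refine ⟨ht, ?_⟩
    obtain ⟨w, hw, hsmall⟩ := hx.exists_jump_le_right ⟨ht.1.1.le, ht.1.2⟩
      (ε := 1 / (k + 1 : ℝ)) (by positivity)
    rw [← empty_mem_iff_bot]
    filter_upwards [inter_mem_nhdsWithin (J k ∩ Ioi t) (Iio_mem_nhds hw)]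
    rintro s ⟨⟨hsJ, hst⟩, hsw⟩
    exact (hsJ.2.trans_le (hsmall s ⟨hst, hsw⟩ hsJ.1.2.le)).false
  refine (countable_iUnion hJ).mono fun t ⟨ht, hjump⟩ => ?_
  obtain ⟨k, hk⟩ := exists_nat_one_div_lt (abs_pos.2 (sub_ne_zero.2 hjump))
  exact mem_iUnion.2 ⟨k, ht, hk⟩

end IsCadlagOn

section Shift

variable {T : ℝ} {x y G : ℝ → ℝ}

lemma IsCadlagOn.tendsto_nhdsLT_of_eq_add (hx : IsCadlagOn T x) (hG : Continuous G)
    (hy : ∀ t ∈ Icc 0 T, y t = x t + G t) {t : ℝ} (ht : t ∈ Ioc 0 T) :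
    Tendsto y (𝓝[<] t) (𝓝 (leftL x t + G t)) := by
  refine ((hx.tendsto_leftL ht).add (hG.tendsto t |>.mono_left nhdsWithin_le_nhds)).congr' ?_
  filter_upwards [Ioo_mem_nhdsLT ht.1] with s hs
  exact (hy s ⟨hs.1.le, hs.2.le.trans ht.2⟩).symm

lemma IsCadlagOn.of_eq_add (hx : IsCadlagOn T x) (hG : Continuous G)
    (hy : ∀ t ∈ Icc 0 T, y t = x t + G t) : IsCadlagOn T y := by
  refine ⟨fun t ht => ?_, fun t ht => ⟨_, hx.tendsto_nhdsLT_of_eq_add hG hy ht⟩⟩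
  rw [hy t ⟨ht.1, ht.2.le⟩]
  refine ((hx.1 t ht).add (hG.tendsto t |>.mono_left nhdsWithin_le_nhds)).congr' ?_
  filter_upwards [Ico_mem_nhdsGE ht.2] with s hs
  exact (hy s ⟨ht.1.trans hs.1, hs.2.le⟩).symm

lemma IsCadlagOn.leftL_of_eq_add (hx : IsCadlagOn T x) (hG : Continuous G)
    (hy : ∀ t ∈ Icc 0 T, y t = x t + G t) {t : ℝ} (ht : t ∈ Icc 0 T) :
    leftL y t = leftL x t + G t := by
  rcases ht.1.eq_or_lt with rfl | ht₀
  · simpa [leftL] using hy 0 ht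
  · rw [leftL, if_neg ht₀.ne',
      leftLim_eq_of_tendsto (hx.tendsto_nhdsLT_of_eq_add hG hy ⟨ht₀, ht.2⟩)]

lemma IsParamRep.mem_Icc {u r : ℝ → ℝ} (hu : IsParamRep T x u r) {s : ℝ} (hs : s ∈ Icc (0:ℝ) 1) :
    r s ∈ Icc 0 T := by
  obtain ⟨-, -, hmono, hr₀, hr₁, -⟩ := hu
  exact ⟨hr₀ ▸ hmono (left_mem_Icc.2 zero_le_one) hs hs.1,
    hr₁ ▸ hmono hs (right_mem_Icc.2 zero_le_one) hs.2⟩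

lemma IsParamRep.of_eq_add {u r : ℝ → ℝ} (hx : IsCadlagOn T x) (hG : Continuous G)
    (hy : ∀ t ∈ Icc 0 T, y t = x t + G t) (hu : IsParamRep T x u r) :
    IsParamRep T y (fun s => u s + G (r s)) r := by
  have hr : ∀ {s}, s ∈ Icc (0:ℝ) 1 → r s ∈ Icc 0 T := hu.mem_Icc
  have hleft : ∀ {t}, t ∈ Icc 0 T → leftL y t = leftL x t + G t := hx.leftL_of_eq_add hG hy
  have hseg : ∀ t ∈ Icc 0 T, ∀ v, v + G t ∈ segment ℝ (leftL y t) (y t) ↔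
      v ∈ segment ℝ (leftL x t) (x t) := fun t ht v => by
    rw [hleft ht, hy t ht, add_comm v, add_comm (leftL x t), add_comm (x t),
      mem_segment_translate]
  obtain ⟨huc, hrc, hmono, hr₀, hr₁, hmem, hsurj, horder⟩ := hu
  refine ⟨huc.add (hG.comp_continuousOn hrc), hrc, hmono, hr₀, hr₁,
    fun s hs => (hseg _ (hr hs) _).2 (hmem s hs), fun t ht v hv => ?_, ?_⟩
  · obtain ⟨s, hs, rfl, hus⟩ := hsurj t ht (v - G t) ((hseg t ht _).1 (by simpa using hv))
    exact ⟨s, hs, rfl, by simp [hus]⟩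
  · intro s₁ hs₁ s₂ hs₂ hle heq
    have hdiff : u s₂ + G (r s₂) - (u s₁ + G (r s₁)) = u s₂ - u s₁ := by rw [heq]; ring
    simpa only [hdiff, hleft (hr hs₁), hy _ (hr hs₁), add_sub_add_right_eq_sub]
      using horder s₁ hs₁ s₂ hs₂ hle heq

lemma exists_paramRep_of_eq_add (hx : IsCadlagOn T x) (hG : Continuous G)
    (hy : ∀ t ∈ Icc 0 T, y t = x t + G t) :
    (∃ u r, IsParamRep T y u r) → ∃ u r, IsParamRep T x u r := by
  rintro ⟨u, r, hu⟩
  refine ⟨_, r, hu.of_eq_add (hx.of_eq_add hG hy) hG.neg fun t ht => ?_⟩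
  simp [hy t ht]

end Shift

lemma unif_nonneg (f : ℝ → ℝ) : 0 ≤ unif f :=
  Real.iSup_nonneg fun _ => abs_nonneg _

lemma abs_le_unif {f : ℝ → ℝ} (hf : ContinuousOn f (Icc 0 1)) {s : ℝ} (hs : s ∈ Icc (0:ℝ) 1) :
    |f s| ≤ unif f := by
  have hbdd := (isCompact_Icc.image_of_continuousOn hf.abs).bddAbove
  rw [image_eq_range] at hbdd
  exact le_ciSup hbdd (⟨s, hs⟩ : Icc (0:ℝ) 1)

lemma unif_le {f : ℝ → ℝ} {K : ℝ} (hK : 0 ≤ K) (hf : ∀ s ∈ Icc (0:ℝ) 1, |f s| ≤ K) :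
    unif f ≤ K :=
  Real.iSup_le (fun s => hf s.1 s.2) hK

def ParamRepsWithin (T δ : ℝ) (x x' : ℝ → ℝ) : Prop :=
  ∃ u r u' r', IsParamRep T x u r ∧ IsParamRep T x' u' r' ∧
    ∀ s ∈ Icc (0:ℝ) 1, |u s - u' s| ≤ δ ∧ |r s - r' s| ≤ δ

section dM1

variable {T : ℝ} {x x' : ℝ → ℝ}

lemma bddBelow_dM1_set : BddBelow {d : ℝ | ∃ ux rx uy ry : ℝ → ℝ, IsParamRep T x ux rx ∧
    IsParamRep T x' uy ry ∧ d = max (unif fun s => ux s - uy s) (unif fun s => rx s - ry s)} :=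
  ⟨0, by rintro _ ⟨_, _, _, _, _, _, rfl⟩; exact le_max_of_le_left (unif_nonneg _)⟩

lemma dM1_nonneg : 0 ≤ dM1 T x x' :=
  Real.sInf_nonneg <| by rintro _ ⟨_, _, _, _, _, _, rfl⟩; exact le_max_of_le_left (unif_nonneg _)

lemma dM1_le {u r u' r' : ℝ → ℝ} (hu : IsParamRep T x u r) (hu' : IsParamRep T x' u' r') :
    dM1 T x x' ≤ max (unif fun s => u s - u' s) (unif fun s => r s - r' s) :=
  csInf_le bddBelow_dM1_set ⟨u, r, u', r', hu, hu', rfl⟩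

lemma dM1_eq_zero_of_not_exists
    (h : ¬((∃ u r, IsParamRep T x u r) ∧ ∃ u r, IsParamRep T x' u r)) : dM1 T x x' = 0 := by
  rw [dM1, ← Real.sInf_empty]
  congr
  exact eq_empty_of_forall_notMem fun _ ⟨u, r, u', r', hu, hu', _⟩ => h ⟨⟨u, r, hu⟩, u', r', hu'⟩

lemma paramRepsWithin_of_dM1_lt (hx : ∃ u r, IsParamRep T x u r)
    (hx' : ∃ u r, IsParamRep T x' u r) {δ : ℝ} (hδ : dM1 T x x' < δ) :
    ParamRepsWithin T δ x x' := by
  obtain ⟨u, r, hu⟩ := hx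
  obtain ⟨u', r', hu'⟩ := hx'
  obtain ⟨_, ⟨u, r, u', r', hu, hu', rfl⟩, hlt⟩ :=
    (csInf_lt_iff bddBelow_dM1_set ⟨_, u, r, u', r', hu, hu', rfl⟩).1 hδ
  refine ⟨u, r, u', r', hu, hu', fun s hs => ⟨?_, ?_⟩⟩
  · exact (abs_le_unif (hu.1.sub hu'.1) hs).trans ((le_max_left _ _).trans hlt.le)
  · exact (abs_le_unif (hu.2.1.sub hu'.2.1) hs).trans ((le_max_right _ _).trans hlt.le)

end dM1

lemma ParamRepsWithin.exists_near {T δ : ℝ} {x x₀ : ℝ → ℝ} (h : ParamRepsWithin T δ x x₀) {t : ℝ}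
    (ht : t ∈ Icc 0 T) :
    ∃ t' ∈ Icc 0 T, |t' - t| ≤ δ ∧ ∃ v ∈ segment ℝ (leftL x₀ t') (x₀ t'), |x t - v| ≤ δ := by
  obtain ⟨u, r, u₀, r₀, hu, hu₀, hδ⟩ := h
  obtain ⟨s, hs, rfl, hus⟩ := hu.2.2.2.2.2.2.1 t ht (x t) (right_mem_segment ℝ _ _)
  refine ⟨r₀ s, hu₀.mem_Icc hs, by rw [abs_sub_comm]; exact (hδ s hs).2, u₀ s,
    hu₀.2.2.2.2.2.1 s hs, hus ▸ (hδ s hs).1⟩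

theorem dM1_le_of_eq_add {T : ℝ} {x x' y y' G G' : ℝ → ℝ} {B : ℝ≥0} {δ η : ℝ}
    (hx : IsCadlagOn T x) (hx' : IsCadlagOn T x') (hG : Continuous G) (hG' : Continuous G')
    (hG'B : LipschitzOnWith B G' (Icc 0 T))
    (hy : ∀ t ∈ Icc 0 T, y t = x t + G t) (hy' : ∀ t ∈ Icc 0 T, y' t = x' t + G' t)
    (hxx' : ParamRepsWithin T δ x x')
    (hη : ∀ t ∈ Icc 0 T, |G t - G' t| ≤ η) :
    dM1 T y y' ≤ (1 + B) * δ + η := by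
  obtain ⟨u, r, u', r', hu, hu', hδ⟩ := hxx'
  have hs₀ : (0:ℝ) ∈ Icc (0:ℝ) 1 := left_mem_Icc.2 zero_le_one
  have hδ₀ : 0 ≤ δ := (abs_nonneg _).trans (hδ 0 hs₀).1
  have hη₀ : 0 ≤ η := (abs_nonneg _).trans (hη _ (hu.mem_Icc hs₀))
  refine (dM1_le (hu.of_eq_add hx hG hy) (hu'.of_eq_add hx' hG' hy')).trans
    (max_le (unif_le (by positivity) fun s hs => ?_) (unif_le (by positivity) fun s hs => ?_))
  · have hG'rr : |G' (r s) - G' (r' s)| ≤ B * δ := by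
      simpa only [Real.dist_eq] using (hG'B.dist_le_mul _ (hu.mem_Icc hs) _ (hu'.mem_Icc hs)).trans
        (mul_le_mul_of_nonneg_left (by simpa only [Real.dist_eq] using (hδ s hs).2) B.2)
    calc |u s + G (r s) - (u' s + G' (r' s))|
        = |(u s - u' s) + (G (r s) - G' (r s)) + (G' (r s) - G' (r' s))| := by ring_nf
      _ ≤ |u s - u' s| + |G (r s) - G' (r s)| + |G' (r s) - G' (r' s)| := abs_add_three _ _ _
      _ ≤ δ + η + B * δ := add_le_add_three (hδ s hs).1 (hη _ (hu.mem_Icc hs)) hG'rr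
      _ = (1 + B) * δ + η := by ring
  · nlinarith [(hδ s hs).2, B.2]

namespace BddMeasOn

variable {T : ℝ} {y : ℝ → ℝ}

lemma aestronglyMeasurable (hy : BddMeasOn T y) :
    AEStronglyMeasurable y (volume.restrict (Icc 0 T)) :=
  ((aemeasurable_restrict_iff_comap_subtype measurableSet_Icc).2
    hy.2.aemeasurable).aestronglyMeasurable

lemma integrableOn (hy : BddMeasOn T y) : IntegrableOn y (Icc 0 T) := by
  obtain ⟨M, hM⟩ := hy.1
  exact Integrable.of_bound hy.aestronglyMeasurable M
    ((ae_restrict_iff' measurableSet_Icc).2 (ae_of_all _ hM))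

lemma integrable_indicator (hy : BddMeasOn T y) : Integrable ((Icc 0 T).indicator y) :=
  hy.integrableOn.integrable_indicator measurableSet_Icc

lemma intervalIntegrable (hy : BddMeasOn T y) {t : ℝ} (ht : t ∈ Icc 0 T) :
    IntervalIntegrable y volume 0 t :=
  (intervalIntegrable_iff_integrableOn_Icc_of_le ht.1).2
    (hy.integrableOn.mono_set (Icc_subset_Icc_right ht.2))

lemma comp_lipschitzWith (hy : BddMeasOn T y) {h : ℝ → ℝ} {K : ℝ≥0} (hh : LipschitzWith K h) :
    BddMeasOn T fun t => h (y t) := by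
  obtain ⟨M, hM⟩ := hy.1
  refine ⟨⟨|h 0| + K * M, fun t ht => ?_⟩, hh.continuous.measurable.comp hy.2⟩
  have hlip := hh.dist_le_mul (y t) 0
  rw [Real.dist_eq, Real.dist_eq, sub_zero] at hlip
  nlinarith [abs_sub_abs_le_abs_sub (h (y t)) (h 0), hM t ht, K.2]

lemma of_eq_add {x G : ℝ → ℝ} (hy : BddMeasOn T y) (hG : Continuous G)
    (hyx : ∀ t ∈ Icc 0 T, y t = x t + G t) : BddMeasOn T x := by
  obtain ⟨M, hM⟩ := hy.1
  obtain ⟨C, hC⟩ := isCompact_Icc.exists_bound_of_continuousOn hG.continuousOn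
  have hx : ∀ t ∈ Icc 0 T, x t = y t - G t := fun t ht => by rw [hyx t ht]; ring
  refine ⟨⟨M + C, fun t ht => ?_⟩, ?_⟩
  · rw [hx t ht]
    exact (abs_sub _ _).trans (add_le_add (hM t ht) (hC t ht))
  · have hxeq : (fun t : Icc (0:ℝ) T => x t) = fun t : Icc (0:ℝ) T => y t - G t :=
      funext fun t => hx t t.2
    rw [hxeq]
    exact hy.2.sub (hG.measurable.comp measurable_subtype_coe)

end BddMeasOn

section Convergence

variable {ι : Type*} {l : Filter ι} {T : ℝ} {x : ι → ℝ → ℝ} {x₀ : ℝ → ℝ} {δ : ι → ℝ}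

lemma tendsto_of_paramRepsWithin (hx₀ : IsCadlagOn T x₀) (hδ : Tendsto δ l (𝓝 0))
    (hrep : ∀ᶠ i in l, ParamRepsWithin T (δ i) (x i) x₀) {t : ℝ} (ht : t ∈ Ioo 0 T)
    (hcont : x₀ t = leftL x₀ t) : Tendsto (fun i => x i t) l (𝓝 (x₀ t)) := by
  refine Metric.tendsto_nhds.2 fun ε hε => ?_
  obtain ⟨ρ, hρ, hnear⟩ := hx₀.exists_segment_near ht hcont (half_pos hε)
  filter_upwards [hrep, hδ.eventually_lt_const hρ, hδ.eventually_lt_const (half_pos hε)]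
    with i hi hiρ hiε
  obtain ⟨t', ht', htt', v, hv, hxv⟩ := hi.exists_near ⟨ht.1.le, ht.2.le⟩
  rw [Real.dist_eq]
  calc |x i t - x₀ t| ≤ |x i t - v| + |v - x₀ t| := abs_sub_le _ _ _
    _ < ε := by linarith [hnear t' ht' (htt'.trans_lt hiρ) v hv]

/-- Convergence at the continuity points, which are almost all points since the jumps are
countable, upgrades to `L¹` convergence by dominated convergence. -/
theorem tendsto_integral_abs_sub_of_paramRepsWithin [l.IsCountablyGenerated] (hT : 0 ≤ T)
    (hx₀ : IsCadlagOn T x₀) (hx₀b : BddMeasOn T x₀) (hxb : ∀ᶠ i in l, BddMeasOn T (x i))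
    (hδ : Tendsto δ l (𝓝 0)) (hrep : ∀ᶠ i in l, ParamRepsWithin T (δ i) (x i) x₀) :
    Tendsto (fun i => ∫ t in (0:ℝ)..T, |x i t - x₀ t|) l (𝓝 0) := by
  obtain ⟨M, hM⟩ := hx₀b.1
  have hIoc : Set.uIoc 0 T = Ioc 0 T := uIoc_of_le hT
  have hlim := intervalIntegral.tendsto_integral_filter_of_dominated_convergence
    (l := l) (a := 0) (b := T) (μ := volume) (F := fun i t => |x i t - x₀ t|) (f := fun _ => 0)
    (fun _ => 1 + 2 * M) ?_ ?_ intervalIntegrable_const ?_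
  · simpa using hlim
  · filter_upwards [hxb] with i hi
    rw [hIoc]
    exact ((hi.aestronglyMeasurable.sub hx₀b.aestronglyMeasurable).norm).mono_measure
      (Measure.restrict_mono Ioc_subset_Icc_self le_rfl)
  · filter_upwards [hrep, hδ.eventually_lt_const one_pos] with i hi hi1
    refine ae_of_all _ fun t ht => ?_
    rw [hIoc] at ht
    obtain ⟨t', ht', -, v, hv, hxv⟩ := hi.exists_near (Ioc_subset_Icc_self ht)
    have hvM := hx₀.abs_le_of_mem_segment hM ht' hv
    have hx₀M := hM t (Ioc_subset_Icc_self ht)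
    rw [Real.norm_eq_abs, abs_abs]
    calc |x i t - x₀ t| ≤ |x i t - v| + |v| + |x₀ t| := by
          linarith [abs_sub_le (x i t) v (x₀ t), abs_sub v (x₀ t)]
      _ ≤ 1 + 2 * M := by linarith
  · have hnull := (hx₀.countable_jumps.union (countable_singleton T)).measure_zero volume
    filter_upwards [measure_eq_zero_iff_ae_notMem.1 hnull] with t hgood ht
    rw [hIoc] at ht
    have hlt : t < T := ht.2.lt_of_ne fun h => hgood (Or.inr h)
    have hcont : x₀ t = leftL x₀ t := by_contra fun h => hgood (Or.inl ⟨⟨ht.1, hlt⟩, h⟩)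
    simpa using ((tendsto_of_paramRepsWithin hx₀ hδ hrep ⟨ht.1, hlt⟩ hcont).sub_const
      (x₀ t)).abs

end Convergence

/-- Obtained from the differential Grönwall inequality for `t ↦ ∫₀ᵗ φ`. -/
theorem le_mul_exp_of_le_add_mul_integral {φ : ℝ → ℝ} {a b T : ℝ} (hφ : Continuous φ)
    (hb : 0 ≤ b) (h : ∀ t ∈ Icc 0 T, φ t ≤ a + b * ∫ s in (0:ℝ)..t, φ s) {t : ℝ}
    (ht : t ∈ Icc 0 T) : φ t ≤ a * Real.exp (b * t) := by
  have hderiv : ∀ t, HasDerivAt (fun t => ∫ s in (0:ℝ)..t, φ s) (φ t) t := fun t =>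
    (hφ.integral_hasStrictDerivAt 0 t).hasDerivAt
  have hprim := le_gronwallBound_of_liminf_deriv_right_le (δ := 0) (K := b) (ε := a)
    (continuous_iff_continuousAt.2 fun t => (hderiv t).continuousAt).continuousOn
    (fun t _ r hr => by
      simpa [slope_def_field, div_eq_inv_mul] using
        (hderiv t).hasDerivWithinAt.liminf_right_slope_le hr)
    (by simp) (fun t ht => by linarith [h t (Ico_subset_Icc_self ht)]) t ht
  rw [sub_zero] at hprim
  calc φ t ≤ a + b * ∫ s in (0:ℝ)..t, φ s := h t ht
    _ ≤ a + b * gronwallBound 0 b a t := by gcongr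
    _ = a * Real.exp (b * t) := by
      rcases eq_or_ne b 0 with rfl | hb₀
      · simp [gronwallBound_K0]
      · rw [gronwallBound_of_K_ne_0 hb₀]
        field_simp
        ring

/-- Cutting `f` off outside `[0, T]` makes the primitive Lipschitz on all of `ℝ` when `f` is
bounded on `[0, T]`, whatever `f` does elsewhere. -/
noncomputable def cutoffPrimitive (T : ℝ) (f : ℝ → ℝ) (t : ℝ) : ℝ :=
  ∫ s in (0:ℝ)..t, (Icc 0 T).indicator f s

section CutoffPrimitive

variable {T : ℝ} {f : ℝ → ℝ}

lemma cutoffPrimitive_eq {t : ℝ} (ht : t ∈ Icc 0 T) :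
    cutoffPrimitive T f t = ∫ s in (0:ℝ)..t, f s :=
  intervalIntegral.integral_congr fun s hs => by
    rw [uIcc_of_le ht.1] at hs
    exact indicator_of_mem (show s ∈ Icc 0 T from ⟨hs.1, hs.2.trans ht.2⟩) f

lemma eq_add_cutoffPrimitive {x y : ℝ → ℝ} (hyx : ∀ t ∈ Icc 0 T, y t = x t + ∫ s in (0:ℝ)..t, f s) :
    ∀ t ∈ Icc 0 T, y t = x t + cutoffPrimitive T f t := fun t ht => by
  rw [cutoffPrimitive_eq ht]
  exact hyx t ht

lemma BddMeasOn.exists_lipschitzWith_cutoffPrimitive (hf : BddMeasOn T f) :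
    ∃ B : ℝ≥0, LipschitzWith B (cutoffPrimitive T f) := by
  obtain ⟨M, hM⟩ := hf.1
  refine ⟨M.toNNReal, LipschitzWith.of_dist_le_mul fun a b => ?_⟩
  have hint : ∀ a b, IntervalIntegrable ((Icc 0 T).indicator f) volume a b := fun _ _ =>
    hf.integrable_indicator.intervalIntegrable
  rw [Real.dist_eq, Real.dist_eq, cutoffPrimitive, cutoffPrimitive,
    intervalIntegral.integral_interval_sub_left (hint 0 a) (hint 0 b)]
  refine intervalIntegral.norm_integral_le_of_norm_le_const (f := (Icc 0 T).indicator f)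
    fun s _ => ?_
  rw [Real.norm_eq_abs, indicator_apply]
  split_ifs with hs
  · exact (hM s hs).trans (Real.le_coe_toNNReal M)
  · simp

lemma BddMeasOn.continuous_cutoffPrimitive (hf : BddMeasOn T f) :
    Continuous (cutoffPrimitive T f) :=
  hf.exists_lipschitzWith_cutoffPrimitive.choose_spec.continuous

end CutoffPrimitive

lemma abs_cutoffPrimitive_sub_le {T : ℝ} {K : ℝ≥0} {h y y' : ℝ → ℝ} (hh : LipschitzWith K h)
    (hy : BddMeasOn T y) (hy' : BddMeasOn T y') {t : ℝ} (ht : t ∈ Icc 0 T) :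
    |cutoffPrimitive T (fun s => h (y s)) t - cutoffPrimitive T (fun s => h (y' s)) t| ≤
      K * ∫ s in (0:ℝ)..t, |y s - y' s| := by
  have hhy := (hy.comp_lipschitzWith hh).intervalIntegrable ht
  have hhy' := (hy'.comp_lipschitzWith hh).intervalIntegrable ht
  rw [cutoffPrimitive_eq ht, cutoffPrimitive_eq ht, ← intervalIntegral.integral_sub hhy hhy',
    ← intervalIntegral.integral_const_mul]
  refine (intervalIntegral.abs_integral_le_integral_abs ht.1).trans <|
    intervalIntegral.integral_mono_on ht.1 (hhy.sub hhy').abs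
      (((hy.intervalIntegrable ht).sub (hy'.intervalIntegrable ht)).abs.const_mul _)
      fun s _ => ?_
  simpa only [Real.dist_eq] using hh.dist_le_mul (y s) (y' s)

/-- Stability of `y = x + ∫₀ᵗ h(y)` under `L¹` perturbations of `x`, by Grönwall. -/
theorem abs_sub_sub_le_of_integral_eq {T : ℝ} {K : ℝ≥0} {h x x' y y' : ℝ → ℝ}
    (hh : LipschitzWith K h) (hy : BddMeasOn T y) (hy' : BddMeasOn T y')
    (hyx : ∀ t ∈ Icc 0 T, y t = x t + ∫ s in (0:ℝ)..t, h (y s))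
    (hyx' : ∀ t ∈ Icc 0 T, y' t = x' t + ∫ s in (0:ℝ)..t, h (y' s))
    {t : ℝ} (ht : t ∈ Icc 0 T) :
    |(y t - x t) - (y' t - x' t)| ≤
      K * (∫ s in (0:ℝ)..T, |x s - x' s|) * Real.exp (K * T) := by
  have hyG := eq_add_cutoffPrimitive hyx
  have hyG' := eq_add_cutoffPrimitive hyx'
  set G := cutoffPrimitive T fun s => h (y s)
  set G' := cutoffPrimitive T fun s => h (y' s)
  have hG := (hy.comp_lipschitzWith hh).continuous_cutoffPrimitive
  have hG' := (hy'.comp_lipschitzWith hh).continuous_cutoffPrimitive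
  have hxx' : ∀ t ∈ Icc 0 T, IntervalIntegrable (fun s => |x s - x' s|) volume 0 t :=
    fun t ht => (((hy.of_eq_add hG hyG).intervalIntegrable ht).sub
      ((hy'.of_eq_add hG' hyG').intervalIntegrable ht)).abs
  have hgronwall : ∀ t ∈ Icc 0 T, |G t - G' t| ≤
      K * (∫ s in (0:ℝ)..T, |x s - x' s|) + K * ∫ s in (0:ℝ)..t, |G s - G' s| := by
    intro t ht
    have hGG' : IntervalIntegrable (fun s => |G s - G' s|) volume 0 t :=
      (hG.sub hG').abs.intervalIntegrable 0 t
    calc |G t - G' t| ≤ K * ∫ s in (0:ℝ)..t, |y s - y' s| :=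
          abs_cutoffPrimitive_sub_le hh hy hy' ht
      _ ≤ K * ∫ s in (0:ℝ)..t, (|x s - x' s| + |G s - G' s|) := by
          gcongr
          refine intervalIntegral.integral_mono_on ht.1
            ((hy.intervalIntegrable ht).sub (hy'.intervalIntegrable ht)).abs
            ((hxx' t ht).add hGG') fun s hs => ?_
          have hsT : s ∈ Icc 0 T := ⟨hs.1, hs.2.trans ht.2⟩
          rw [hyG s hsT, hyG' s hsT]
          exact (abs_add_le _ _).trans_eq' (by ring_nf)
      _ ≤ K * (∫ s in (0:ℝ)..T, |x s - x' s|) + K * ∫ s in (0:ℝ)..t, |G s - G' s| := by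
          rw [intervalIntegral.integral_add (hxx' t ht) hGG', mul_add]
          gcongr
          exact intervalIntegral.integral_mono_interval le_rfl ht.1 ht.2
            (ae_of_all _ fun _ => abs_nonneg _) (hxx' T (right_mem_Icc.2 (ht.1.trans ht.2)))
  have hI : 0 ≤ ∫ s in (0:ℝ)..T, |x s - x' s| :=
    intervalIntegral.integral_nonneg (ht.1.trans ht.2) fun _ _ => abs_nonneg _
  calc |(y t - x t) - (y' t - x' t)| = |G t - G' t| := by rw [hyG t ht, hyG' t ht]; ring_nf
    _ ≤ K * (∫ s in (0:ℝ)..T, |x s - x' s|) * Real.exp (K * t) :=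
      le_mul_exp_of_le_add_mul_integral (hG.sub hG').abs K.2 hgronwall ht
    _ ≤ K * (∫ s in (0:ℝ)..T, |x s - x' s|) * Real.exp (K * T) := by
      gcongr
      exact ht.2

lemma exists_lipschitzWith_eq_add {T : ℝ} {K : ℝ≥0} {h x y : ℝ → ℝ} (hh : LipschitzWith K h)
    (hy : BddMeasOn T y) (hyx : ∀ t ∈ Icc 0 T, y t = x t + ∫ s in (0:ℝ)..t, h (y s)) :
    ∃ G : ℝ → ℝ, ∃ B : ℝ≥0, LipschitzWith B G ∧ ∀ t ∈ Icc 0 T, y t = x t + G t :=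
  have ⟨B, hB⟩ := (hy.comp_lipschitzWith hh).exists_lipschitzWith_cutoffPrimitive
  ⟨_, B, hB, eq_add_cutoffPrimitive hyx⟩

/-- Theorem 1.1: the integral representation map is continuous on `D([0,T],ℝ)`
in the `M₁` topology. -/
theorem m1_continuity_of_integral_representation
    (T : ℝ) (hT : 0 < T) (c : ℝ) (h : ℝ → ℝ)
    (hLip : ∀ w₁ w₂ : ℝ, |h w₁ - h w₂| ≤ c * |w₁ - w₂|)
    (x : ℕ → ℝ → ℝ) (x₀ : ℝ → ℝ) (y : ℕ → ℝ → ℝ) (y₀ : ℝ → ℝ)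
    (hxc : ∀ n, IsCadlagOn T (x n)) (hx₀c : IsCadlagOn T x₀)
    (hyb : ∀ n, BddMeasOn T (y n)) (hy₀b : BddMeasOn T y₀)
    (hy : ∀ n, ∀ t ∈ Set.Icc (0:ℝ) T, y n t = x n t + ∫ s in (0:ℝ)..t, h (y n s))
    (hy₀ : ∀ t ∈ Set.Icc (0:ℝ) T, y₀ t = x₀ t + ∫ s in (0:ℝ)..t, h (y₀ s))
    (hconv : Filter.Tendsto (fun n => dM1 T (x n) x₀) Filter.atTop (nhds 0)) :
    Filter.Tendsto (fun n => dM1 T (y n) y₀) Filter.atTop (nhds 0) := by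
  have hh : LipschitzWith c.toNNReal h :=
    LipschitzWith.of_dist_le' fun a b => by simpa only [Real.dist_eq] using hLip a b
  choose G _ hG hyG using fun n => exists_lipschitzWith_eq_add hh (hyb n) (hy n)
  replace hG : ∀ n, Continuous (G n) := fun n => (hG n).continuous
  obtain ⟨G₀, B, hG₀, hyG₀⟩ := exists_lipschitzWith_eq_add hh hy₀b hy₀
  set δ : ℕ → ℝ := fun n => dM1 T (x n) x₀ + 1 / (n + 1)
  have hδ : Tendsto δ atTop (𝓝 0) := by
    simpa only [add_zero] using hconv.add tendsto_one_div_add_atTop_nhds_zero_nat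
  -- Off `S`, both `dM1 T (x n) x₀` and `dM1 T (y n) y₀` are the junk value `sInf ∅ = 0`.
  set S := {n | (∃ u r, IsParamRep T (x n) u r) ∧ ∃ u r, IsParamRep T x₀ u r}
  have hrep : ∀ n ∈ S, ParamRepsWithin T (δ n) (x n) x₀ := fun n hn =>
    paramRepsWithin_of_dM1_lt hn.1 hn.2 (lt_add_of_pos_right _ Nat.one_div_pos_of_nat)
  have hL1 := tendsto_integral_abs_sub_of_paramRepsWithin hT.le hx₀c
    (hy₀b.of_eq_add hG₀.continuous hyG₀)
    (Eventually.of_forall fun n => (hyb n).of_eq_add (hG n) (hyG n))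
    (hδ.mono_left inf_le_left)
    (eventually_inf_principal.2 (Eventually.of_forall hrep))
  have hbound : ∀ n ∈ S, dM1 T (y n) y₀ ≤ (1 + B) * δ n +
      c.toNNReal * (∫ t in (0:ℝ)..T, |x n t - x₀ t|) * Real.exp (c.toNNReal * T) :=
    fun n hn => dM1_le_of_eq_add (hxc n) hx₀c (hG n) hG₀.continuous hG₀.lipschitzOnWith
      (hyG n) hyG₀ (hrep n hn) fun t ht => by
        simpa [hyG n t ht, hyG₀ t ht] using
          abs_sub_sub_le_of_integral_eq hh (hyb n) hy₀b (hy n) hy₀ ht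
  have hzero : ∀ n ∉ S, dM1 T (y n) y₀ = 0 := fun n hn =>
    dM1_eq_zero_of_not_exists fun ⟨hyn, hy₀'⟩ => hn
      ⟨exists_paramRep_of_eq_add (hxc n) (hG n) (hyG n) hyn,
        exists_paramRep_of_eq_add hx₀c hG₀.continuous hyG₀ hy₀'⟩
  rw [← tendsto_inf_principal_nhds_iff_of_forall_eq hzero]
  refine tendsto_of_tendsto_of_tendsto_of_le_of_le' tendsto_const_nhds ?_
    (Eventually.of_forall fun n => dM1_nonneg)
    (eventually_inf_principal.2 (Eventually.of_forall hbound))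
  simpa using ((hδ.mono_left inf_le_left).const_mul (1 + B : ℝ)).add
    ((hL1.const_mul _).mul_const _)
end

section
/- Let T > 0, let x be a càdlàg function on [0,T], and let (u, r) ∈ Π(x) be a parametric representation of x. Then sup_{s∈[0,1]} |x(r(s)) − u(s)| = J_max(x). (The identity ‖x ∘ r − u‖ = J_max(x) used in the proof of Lemma 4.2(a).) -/
open Set Filter MeasureTheory Topology

/-! Each `u s` lies on the segment between `x (r s)−` and `x (r s)`, so `|x (r s) - u s|` is at
most the jump of `x` at `r s`; conversely the representation passes through `x t−` at every
`t ∈ [0, T]`, where the two quantities agree. Hence each supremum dominates the other term by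
term, which forces equality in `ℝ` even in the unbounded case. -/

namespace IsParamRep

variable {T : ℝ} {x u r : ℝ → ℝ}

theorem mem_Icc_s15 (hp : IsParamRep T x u r) {s : ℝ} (hs : s ∈ Icc (0 : ℝ) 1) :
    r s ∈ Icc (0 : ℝ) T := by
  obtain ⟨-, -, hmono, hr0, hr1, -⟩ := hp
  have h0 : (0 : ℝ) ∈ Icc (0 : ℝ) 1 := left_mem_Icc.2 zero_le_one
  have h1 : (1 : ℝ) ∈ Icc (0 : ℝ) 1 := right_mem_Icc.2 zero_le_one
  exact ⟨hr0 ▸ hmono h0 hs hs.1, hr1 ▸ hmono hs h1 hs.2⟩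

theorem abs_sub_le_jump (hp : IsParamRep T x u r) {s : ℝ} (hs : s ∈ Icc (0 : ℝ) 1) :
    |x (r s) - u s| ≤ |x (r s) - leftL x (r s)| := by
  obtain ⟨-, -, -, -, -, hseg, -⟩ := hp
  have hu := hseg s hs
  rw [segment_eq_uIcc] at hu
  exact abs_sub_right_of_mem_uIcc hu

theorem exists_eq_leftL (hp : IsParamRep T x u r) {t : ℝ} (ht : t ∈ Icc (0 : ℝ) T) :
    ∃ s ∈ Icc (0 : ℝ) 1, r s = t ∧ u s = leftL x t := by
  obtain ⟨-, -, -, -, -, -, hsurj, -⟩ := hp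
  exact hsurj t ht _ (left_mem_segment ℝ _ _)

end IsParamRep

theorem sup_comp_sub_eq_jmax_general
    (T : ℝ) (x : ℝ → ℝ)
    (u r : ℝ → ℝ) (hp : IsParamRep T x u r) :
    (⨆ s : Set.Icc (0:ℝ) 1, |x (r s.1) - u s.1|) = Jmax T x := by
  refine csSup_eq_csSup_of_forall_exists_le ?_ ?_
  · rintro _ ⟨⟨s, hs⟩, rfl⟩
    exact ⟨_, ⟨⟨r s, hp.mem_Icc_s15 hs⟩, rfl⟩, hp.abs_sub_le_jump hs⟩
  · rintro _ ⟨⟨t, ht⟩, rfl⟩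
    obtain ⟨s, hs, rfl, hus⟩ := hp.exists_eq_leftL ht
    exact ⟨_, ⟨⟨s, hs⟩, rfl⟩, by simp [hus]⟩

/-- The identity `‖x ∘ r − u‖ = J_max(x)` used in the proof of Lemma 4.2(a). -/
theorem sup_comp_sub_eq_jmax
    (T : ℝ) (hT : 0 < T) (x : ℝ → ℝ) (hx : IsCadlagOn T x)
    (u r : ℝ → ℝ) (hp : IsParamRep T x u r) :
    (⨆ s : Set.Icc (0:ℝ) 1, |x (r s.1) - u s.1|) = Jmax T x :=
  sup_comp_sub_eq_jmax_general T x u r hp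
end
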